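/- arXiv:math/0009148 — 3 statements merged into one kernel-verified Lean document; each statement's English description precedes it below -/
import Mathlib

section
/- Let B be an n×2 integer matrix (n ≥ 4) whose first four rows lie in the open quadrants (+,+), (−,+), (−,−), (+,−) of ℤ² respectively. Let v ∈ ℂⁿ be defined by v = B₁₊ + B₂₊ − e₁ − e₂ − e₄ + Σ_{i=5}^n αᵢ eᵢ, where B₁, B₂ are the columns of B, u₊ denotes the componentwise positive part, and α₅,…,αₙ are non-rational complex numbers. Then there is no z ∈ ℤ² with z ≠ 0 such that (B·z)ᵢ ≤ vᵢ for i = 1,2,4 and (B·z)₃ < 0. (Equivalently, v − e₃ has minimum negative support with respect to shifts by integer combinations of the columns of B.) -/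
/-!
Split `z = (x, y) ∈ ℤ²` by the signs `x ≤ 0` or `x ≥ 1` and `y ≤ 0` or `y ≥ 1`. Exactly one of
the first four rows of `B` has the matching sign pattern, and for that row `b` integrality gives
`b · z ≥ b₊ · 1 = (b₁)₊ + (b₂)₊`. For rows 1, 2, 4 this contradicts `(B z)ᵢ ≤ vᵢ = (b₁)₊ + (b₂)₊ - 1`;
for row 3 the bound reads `(B z)₃ ≥ 0`.
-/

section

variable {α : Type*} [Ring α] [LinearOrder α] [IsStrictOrderedRing α] {a b x y : α}

lemma max_zero_le_mul (h : a ≤ 0 ∧ x ≤ 0 ∨ 0 ≤ a ∧ 1 ≤ x) : max a 0 ≤ a * x := by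
  rcases h with ⟨ha, hx⟩ | ⟨ha, hx⟩
  · rw [max_eq_right ha]
    exact mul_nonneg_of_nonpos_of_nonpos ha hx
  · rw [max_eq_left ha]
    exact le_mul_of_one_le_right ha hx

lemma max_zero_add_max_zero_le_dot (hx : a ≤ 0 ∧ x ≤ 0 ∨ 0 ≤ a ∧ 1 ≤ x)
    (hy : b ≤ 0 ∧ y ≤ 0 ∨ 0 ≤ b ∧ 1 ≤ y) : max a 0 + max b 0 ≤ a * x + b * y :=
  add_le_add (max_zero_le_mul hx) (max_zero_le_mul hy)

end

/-- With `B` an n×2 integer matrix whose first four rows lie in the open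
quadrants (+,+), (−,+), (−,−), (+,−) of ℤ², and `v` the vector of Construction 3.3
(whose coordinates 1, 2, 4 are the integers `b₁₁+b₁₂−1`, `b₂₂−1`, `b₄₁−1`, the
positive parts minus 1), there is no nonzero `z ∈ ℤ²` with `(B·z)ᵢ ≤ vᵢ` for
`i = 1,2,4` and `(B·z)₃ < 0`; i.e. `v − e₃` has minimum negative support. -/
theorem stmt0 (n : ℕ) (hn : 4 ≤ n) (B : Fin n → Fin 2 → ℤ)
    (h1 : 0 < B ⟨0, by omega⟩ 0 ∧ 0 < B ⟨0, by omega⟩ 1)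
    (h2 : B ⟨1, by omega⟩ 0 < 0 ∧ 0 < B ⟨1, by omega⟩ 1)
    (h3 : B ⟨2, by omega⟩ 0 < 0 ∧ B ⟨2, by omega⟩ 1 < 0)
    (h4 : 0 < B ⟨3, by omega⟩ 0 ∧ B ⟨3, by omega⟩ 1 < 0) :
    ¬ ∃ z : ℤ × ℤ, z ≠ 0 ∧
      B ⟨0, by omega⟩ 0 * z.1 + B ⟨0, by omega⟩ 1 * z.2 ≤
        max (B ⟨0, by omega⟩ 0) 0 + max (B ⟨0, by omega⟩ 1) 0 - 1 ∧
      B ⟨1, by omega⟩ 0 * z.1 + B ⟨1, by omega⟩ 1 * z.2 ≤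
        max (B ⟨1, by omega⟩ 0) 0 + max (B ⟨1, by omega⟩ 1) 0 - 1 ∧
      B ⟨3, by omega⟩ 0 * z.1 + B ⟨3, by omega⟩ 1 * z.2 ≤
        max (B ⟨3, by omega⟩ 0) 0 + max (B ⟨3, by omega⟩ 1) 0 - 1 ∧
      B ⟨2, by omega⟩ 0 * z.1 + B ⟨2, by omega⟩ 1 * z.2 < 0 := by
  rintro ⟨⟨x, y⟩, -, H1, H2, H4, H3⟩
  rcases le_or_gt x 0 with hx | hx <;> rcases le_or_gt y 0 with hy | hy
  · have := max_zero_add_max_zero_le_dot (.inl ⟨h3.1.le, hx⟩) (.inl ⟨h3.2.le, hy⟩)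
    linarith [le_max_right (B ⟨2, by omega⟩ 0) 0, le_max_right (B ⟨2, by omega⟩ 1) 0]
  · have := max_zero_add_max_zero_le_dot (.inl ⟨h2.1.le, hx⟩) (.inr ⟨h2.2.le, hy⟩)
    linarith
  · have := max_zero_add_max_zero_le_dot (.inr ⟨h4.1.le, hx⟩) (.inl ⟨h4.2.le, hy⟩)
    linarith
  · have := max_zero_add_max_zero_le_dot (.inr ⟨h1.1.le, hx⟩) (.inr ⟨h1.2.le, hy⟩)
    linarith
end

section
/- Let b⁽¹⁾, b⁽²⁾, b⁽³⁾, b⁽⁴⁾ ∈ ℤ² lie in the open quadrants (+,+), (−,+), (−,−), (+,−) respectively, and let η₁ = b₁₁ + b₁₂ − 1, η₂ = b₂₂ − 1, η₄ = b₄₁ − 1 (where b⁽ⁱ⁾ = (bᵢ₁, bᵢ₂)). Then the only integer point z ∈ ℤ² satisfying ⟨b⁽¹⁾,z⟩ ≤ η₁, ⟨b⁽²⁾,z⟩ ≤ η₂, ⟨b⁽⁴⁾,z⟩ ≤ η₄, and ⟨b⁽³⁾,z⟩ ≤ 0 is z = 0. Moreover, each of the three points (1,0), (0,1), (1,1) satisfies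 all but one of these four inequalities (a different one each). -/
/-!
A nonzero `z ∈ ℤ²` either has a positive coordinate, which is then at least `1`, or lies in
the closed negative quadrant. In the first case `z` lies in the closed quadrant of `b⁽¹⁾`,
`b⁽²⁾` or `b⁽⁴⁾` with that coordinate at least `1`, and pairing it with that vector overshoots
the corresponding `ηᵢ`; in the second case `⟨b⁽³⁾, z⟩ > 0`.
-/

section QuadrantPairing

variable {R : Type*} [Ring R] [LinearOrder R] [IsStrictOrderedRing R] {a b x y : R}

theorem add_le_mul_add_mul_of_one_le (ha : 0 ≤ a) (hb : 0 ≤ b) (hx : 1 ≤ x) (hy : 1 ≤ y) :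
    a + b ≤ a * x + b * y :=
  add_le_add (le_mul_of_one_le_right ha hx) (le_mul_of_one_le_right hb hy)

theorem le_mul_add_mul_of_nonpos_of_one_le (ha : a ≤ 0) (hb : 0 ≤ b) (hx : x ≤ 0) (hy : 1 ≤ y) :
    b ≤ a * x + b * y := by
  simpa using add_le_add (mul_nonneg_of_nonpos_of_nonpos ha hx) (le_mul_of_one_le_right hb hy)

theorem mul_add_mul_pos_of_nonpos (ha : a < 0) (hb : b < 0) (hx : x ≤ 0) (hy : y ≤ 0)
    (hxy : x ≠ 0 ∨ y ≠ 0) : 0 < a * x + b * y := by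
  rcases hxy with hx' | hy'
  · exact add_pos_of_pos_of_nonneg (mul_pos_of_neg_of_neg ha (hx.lt_of_ne hx'))
      (mul_nonneg_of_nonpos_of_nonpos hb.le hy)
  · exact add_pos_of_nonneg_of_pos (mul_nonneg_of_nonpos_of_nonpos ha.le hx)
      (mul_pos_of_neg_of_neg hb (hy.lt_of_ne hy'))

end QuadrantPairing

/-- with `b⁽¹⁾,…,b⁽⁴⁾` in the open quadrants (+,+), (−,+), (−,−), (+,−)
and `η₁ = b₁₁+b₁₂−1`, `η₂ = b₂₂−1`, `η₄ = b₄₁−1`, the only `z ∈ ℤ²` with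
`⟨b⁽¹⁾,z⟩ ≤ η₁`, `⟨b⁽²⁾,z⟩ ≤ η₂`, `⟨b⁽⁴⁾,z⟩ ≤ η₄`, `⟨b⁽³⁾,z⟩ ≤ 0` is `z = 0`;
moreover `(1,1)` violates only the first inequality, `(0,1)` only the second, and
`(1,0)` only the fourth, satisfying the remaining three in each case. -/
theorem stmt11 (b1 b2 b3 b4 : ℤ × ℤ)
    (h1 : 0 < b1.1 ∧ 0 < b1.2) (h2 : b2.1 < 0 ∧ 0 < b2.2)
    (h3 : b3.1 < 0 ∧ b3.2 < 0) (h4 : 0 < b4.1 ∧ b4.2 < 0) :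
    (∀ z : ℤ × ℤ,
      b1.1 * z.1 + b1.2 * z.2 ≤ b1.1 + b1.2 - 1 →
      b2.1 * z.1 + b2.2 * z.2 ≤ b2.2 - 1 →
      b4.1 * z.1 + b4.2 * z.2 ≤ b4.1 - 1 →
      b3.1 * z.1 + b3.2 * z.2 ≤ 0 → z = 0) ∧
    -- z = (1,1): violates the first inequality only
    (¬ b1.1 * 1 + b1.2 * 1 ≤ b1.1 + b1.2 - 1) ∧
    (b2.1 * 1 + b2.2 * 1 ≤ b2.2 - 1) ∧
    (b4.1 * 1 + b4.2 * 1 ≤ b4.1 - 1) ∧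
    (b3.1 * 1 + b3.2 * 1 ≤ 0) ∧
    -- z = (0,1): violates the second inequality only
    (b1.1 * 0 + b1.2 * 1 ≤ b1.1 + b1.2 - 1) ∧
    (¬ b2.1 * 0 + b2.2 * 1 ≤ b2.2 - 1) ∧
    (b4.1 * 0 + b4.2 * 1 ≤ b4.1 - 1) ∧
    (b3.1 * 0 + b3.2 * 1 ≤ 0) ∧
    -- z = (1,0): violates the fourth inequality only
    (b1.1 * 1 + b1.2 * 0 ≤ b1.1 + b1.2 - 1) ∧
    (b2.1 * 1 + b2.2 * 0 ≤ b2.2 - 1) ∧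
    (¬ b4.1 * 1 + b4.2 * 0 ≤ b4.1 - 1) ∧
    (b3.1 * 1 + b3.2 * 0 ≤ 0) := by
  refine ⟨?_, by omega, by omega, by omega, by omega, by omega, by omega, by omega, by omega,
    by omega, by omega, by omega, by omega⟩
  rintro ⟨x, y⟩ hb1 hb2 hb4 hb3
  dsimp only at hb1 hb2 hb4 hb3
  rcases le_or_gt x 0 with hx | hx <;> rcases le_or_gt y 0 with hy | hy
  · by_contra hxy
    rw [Prod.mk_eq_zero, not_and_or] at hxy
    exact (mul_add_mul_pos_of_nonpos h3.1 h3.2 hx hy hxy).not_ge hb3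
  · have := le_mul_add_mul_of_nonpos_of_one_le h2.1.le h2.2.le hx hy
    omega
  · have := le_mul_add_mul_of_nonpos_of_one_le h4.2.le h4.1.le hy hx
    omega
  · have := add_le_mul_add_mul_of_one_le h1.1.le h1.2.le hx hy
    omega
end

section
/- Let A ∈ ℤ^{d×n} have rank d with first row all ones, and let u, v ∈ ℂⁿ with A·u = A·v. Suppose B ∈ ℤ^{n×2} is a Gale dual of A (columns spanning ker A over ℝ) whose rows 3 and j (for some j ≥ 5) are linearly independent, and suppose u = v − B·y for some y ∈ ℂ². If u₃ = v₃ (i.e. (B·y)₃ = 0) and uⱼ ∈ ℤ while vⱼ = αⱼ ∉ ℚ, then y is determined by a 2×2 invertible system and lies in ℚ(αⱼ)² \ ℚ²; consequently, if α₅,…,αₙ are chosen so that αᵢ ∉ ℚ(α₅,…,α̂ᵢ,…,αₙ) for each i, then u can have at most the coordinates indexed by {1,2,3,4, j} integral, and if additionally the field condition holds, uₖ ∉ ℤ for all k ≥ 5 with k ≠ j whose row of B is independent of rows 3 and j. -/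
/-- field-theoretic argument in Lemma 4.3: suppose rows 3 and `j`
(for some `j ≥ 5`, i.e. `4 ≤ j` in 0-indexing) of the Gale dual `B` are linearly
independent, `u = v − B·y` with `(B·y)₃ = 0` and `uⱼ ∈ ℤ`, where
`v = B₁₊ + B₂₊ − e₁ − e₂ − e₄ + Σ_{i≥5} αᵢeᵢ` and the `αᵢ` satisfy
`αᵢ ∉ ℚ(α₅,…,α̂ᵢ,…,αₙ)`.  Then `y ∈ ℚ(αⱼ)² ∖ ℚ²`, and `uₖ ∉ ℤ` for every `k ≥ 5`,
`k ≠ j`, whose row of `B` is independent of rows 3 and `j`. -/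
theorem stmt13 (n : ℕ) (hn : 4 ≤ n) (B : Fin n → Fin 2 → ℤ)
    (α : Fin n → ℂ)
    (hα : ∀ i : Fin n, 4 ≤ (i : ℕ) →
      α i ∉ IntermediateField.adjoin ℚ (α '' {k : Fin n | 4 ≤ (k : ℕ) ∧ k ≠ i}))
    (v : Fin n → ℂ)
    (hv : ∀ i : Fin n, v i =
      ((max (B i 0) 0 + max (B i 1) 0 : ℤ) : ℂ)
      - (if (i : ℕ) = 0 ∨ (i : ℕ) = 1 ∨ (i : ℕ) = 3 then 1 else 0)
      + (if 4 ≤ (i : ℕ) then α i else 0))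
    (j : Fin n) (hj : 4 ≤ (j : ℕ))
    (hindep : B ⟨2, by omega⟩ 0 * B j 1 - B ⟨2, by omega⟩ 1 * B j 0 ≠ 0)
    (y : ℂ × ℂ) (u : Fin n → ℂ)
    (hu : ∀ i : Fin n, u i = v i - ((B i 0 : ℂ) * y.1 + (B i 1 : ℂ) * y.2))
    (h3 : (B ⟨2, by omega⟩ 0 : ℂ) * y.1 + (B ⟨2, by omega⟩ 1 : ℂ) * y.2 = 0)
    (hjint : ∃ m : ℤ, u j = (m : ℂ)) :
    (y.1 ∈ IntermediateField.adjoin ℚ ({α j} : Set ℂ) ∧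
     y.2 ∈ IntermediateField.adjoin ℚ ({α j} : Set ℂ)) ∧
    ¬ ((∃ q : ℚ, y.1 = (q : ℂ)) ∧ (∃ q : ℚ, y.2 = (q : ℂ))) ∧
    (∀ k : Fin n, 4 ≤ (k : ℕ) → k ≠ j →
      B k 0 * B ⟨2, by omega⟩ 1 - B k 1 * B ⟨2, by omega⟩ 0 ≠ 0 →
      B k 0 * B j 1 - B k 1 * B j 0 ≠ 0 →
      ¬ ∃ m : ℤ, u k = (m : ℂ)) := by
  obtain ⟨m, hm⟩ := hjint
  have hj' : ¬((j : ℕ) = 0 ∨ (j : ℕ) = 1 ∨ (j : ℕ) = 3) := by omega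
  set a : ℤ := B ⟨2, by omega⟩ 0 with ha
  set b : ℤ := B ⟨2, by omega⟩ 1 with hb
  have hvj : v j = ((max (B j 0) 0 + max (B j 1) 0 : ℤ) : ℂ) + α j := by
    rw [hv j, if_neg hj', if_pos hj]; ring
  set e : ℤ := max (B j 0) 0 + max (B j 1) 0 - m with he
  have heqj : (B j 0 : ℂ) * y.1 + (B j 1 : ℂ) * y.2 = (e : ℂ) + α j := by
    have h := hu j
    rw [hm, hvj] at h
    push_cast [he] at h ⊢
    linear_combination h
  have hD : ((a : ℂ) * (B j 1 : ℂ) - (b : ℂ) * (B j 0 : ℂ)) ≠ 0 := by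
    have : ((a * B j 1 - b * B j 0 : ℤ) : ℂ) ≠ 0 := by exact_mod_cast hindep
    push_cast at this; convert this using 2
  have hy1 : y.1 = -(b : ℂ) * ((e : ℂ) + α j) / ((a : ℂ) * (B j 1 : ℂ) - (b : ℂ) * (B j 0 : ℂ)) := by
    field_simp
    linear_combination (B j 1 : ℂ) * h3 - (b : ℂ) * heqj
  have hy2 : y.2 = (a : ℂ) * ((e : ℂ) + α j) / ((a : ℂ) * (B j 1 : ℂ) - (b : ℂ) * (B j 0 : ℂ)) := by
    field_simp
    linear_combination -(B j 0 : ℂ) * h3 + (a : ℂ) * heqj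
  have hK : ∀ z : ℤ, ((z : ℂ)) ∈ IntermediateField.adjoin ℚ ({α j} : Set ℂ) :=
    fun z => intCast_mem _ z
  have hαK : α j ∈ IntermediateField.adjoin ℚ ({α j} : Set ℂ) :=
    IntermediateField.mem_adjoin_simple_self ℚ (α j)
  refine ⟨⟨?_, ?_⟩, ?_, ?_⟩
  · rw [hy1]
    exact div_mem (mul_mem (neg_mem (hK b)) (add_mem (hK e) hαK))
      (sub_mem (mul_mem (hK a) (hK _)) (mul_mem (hK b) (hK _)))
  · rw [hy2]
    exact div_mem (mul_mem (hK a) (add_mem (hK e) hαK))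
      (sub_mem (mul_mem (hK a) (hK _)) (mul_mem (hK b) (hK _)))
  · rintro ⟨⟨q1, hq1⟩, ⟨q2, hq2⟩⟩
    apply hα j hj
    rw [hq1, hq2] at heqj
    have : α j = (((B j 0 : ℚ) * q1 + (B j 1 : ℚ) * q2 - (e : ℚ) : ℚ) : ℂ) := by
      push_cast
      linear_combination -heqj
    rw [this]
    exact SubfieldClass.ratCast_mem _ _
  · rintro k hk hkj hg - ⟨m', hm'⟩
    apply hα j hj
    have hk' : ¬((k : ℕ) = 0 ∨ (k : ℕ) = 1 ∨ (k : ℕ) = 3) := by omega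
    have hvk : v k = ((max (B k 0) 0 + max (B k 1) 0 : ℤ) : ℂ) + α k := by
      rw [hv k, if_neg hk', if_pos hk]; ring
    set cK : ℤ := max (B k 0) 0 + max (B k 1) 0 with hcK
    have heqk : (B k 0 : ℂ) * y.1 + (B k 1 : ℂ) * y.2 = (cK : ℂ) + α k - m' := by
      have h := hu k
      rw [hm', hvk] at h
      linear_combination h
    rw [hy1, hy2] at heqk
    have hG : ((B k 1 : ℂ) * (a : ℂ) - (B k 0 : ℂ) * (b : ℂ)) ≠ 0 := by
      have h1 : B k 1 * a - B k 0 * b ≠ 0 := fun h => hg (by linarith)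
      have : ((B k 1 * a - B k 0 * b : ℤ) : ℂ) ≠ 0 := by exact_mod_cast h1
      push_cast at this; convert this using 2
    have ht : ((B k 1 : ℂ) * (a : ℂ) - (B k 0 : ℂ) * (b : ℂ)) * ((e : ℂ) + α j)
        = ((cK : ℂ) + α k - (m' : ℂ)) * ((a : ℂ) * (B j 1 : ℂ) - (b : ℂ) * (B j 0 : ℂ)) := by
      apply mul_right_cancel₀ hD
      field_simp at heqk
      linear_combination ((a : ℂ) * (B j 1 : ℂ) - (b : ℂ) * (B j 0 : ℂ)) * heqk
    have key : α j = ((a : ℂ) * (B j 1 : ℂ) - (b : ℂ) * (B j 0 : ℂ))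
        / ((B k 1 : ℂ) * (a : ℂ) - (B k 0 : ℂ) * (b : ℂ))
        * ((cK : ℂ) - (m' : ℂ) + α k) - (e : ℂ) := by
      rw [eq_sub_iff_add_eq, div_mul_eq_mul_div, eq_div_iff hG]
      linear_combination ht
    rw [key]
    have hαF : α k ∈ IntermediateField.adjoin ℚ (α '' {i : Fin n | 4 ≤ (i : ℕ) ∧ i ≠ j}) :=
      IntermediateField.subset_adjoin ℚ _ ⟨k, ⟨hk, hkj⟩, rfl⟩
    have hF : ∀ z : ℤ,
        ((z : ℂ)) ∈ IntermediateField.adjoin ℚ (α '' {i : Fin n | 4 ≤ (i : ℕ) ∧ i ≠ j}) :=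
      fun z => intCast_mem _ z
    exact sub_mem (mul_mem (div_mem (sub_mem (mul_mem (hF a) (hF _)) (mul_mem (hF b) (hF _)))
      (sub_mem (mul_mem (hF _) (hF a)) (mul_mem (hF _) (hF b))))
      (add_mem (sub_mem (hF cK) (hF m')) hαF)) (hF e)
end
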